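/- Let H and K be real separable Hilbert spaces, let T, S and S_n be positive bounded linear operators on H, and let V : K → H be a bounded linear operator with V*V = id_K and such that VV* equals the orthogonal projection P of H onto the closure of the range of S_n. Let μ > 0. Set Q_μ := ‖(S + μI)^{-1/2}(T + μI)^{1/2}‖, Q*_μ := ‖(T + μI)^{-1/2}(S + μI)^{1/2}‖, and Q_{n,μ} := ‖(S_n + μI)^{-1/2}(T + μI)^{1/2}‖. Then ‖T^{1/2} (V (V*SV + μ·id_K)^{-1} V* S − I)(I − P)‖ ≤ (Q_μ Q*_μ + 1)·μ^{1/2}·Q_{n,μ}. -/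

import Mathlib

/-!
Write `A = T + μ`, `B = S + μ`, `C = Sₙ + μ` and `G = V (V*SV + μ)⁻¹ V*`. Since `Sₙ` vanishes on
the range of `I - P`, `C^{-1/2} (I - P) = μ^{-1/2} (I - P)`, and inserting `A^{∓1/2}`, `B^{∓1/2}`
gives the factorisation
`T^{1/2} (G S - I) C^{-1/2} = (T^{1/2} A^{-1/2}) (X - I) (A^{1/2} C^{-1/2})`, where
`X = (A^{1/2} B^{-1/2}) Π (B^{-1/2} S B^{-1/2}) (B^{1/2} A^{-1/2})` and `Π = B^{1/2} G B^{1/2}`.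
As `V* B V = V*SV + μ`, `Π` is the orthogonal projection onto the range of `B^{1/2} V`. Hence
`T^{1/2} A^{-1/2}`, `Π`, `B^{-1/2} S B^{-1/2}` and `I - P` are contractions, while the three
remaining factors have norms `Q_μ`, `Q*_μ` and `Q_{n,μ}`: a product of two self-adjoint operators
has the same norm as the reversed product.
-/

open ContinuousLinearMap

/-- Real powers of a (positive) bounded operator on a real Hilbert space, defined via the
continuous functional calculus. -/
noncomputable def opow {E : Type*} [NormedAddCommGroup E] [InnerProductSpace ℝ E]
    [CompleteSpace E]
    [ContinuousFunctionalCalculus ℝ (E →L[ℝ] E) (IsSelfAdjoint : (E →L[ℝ] E) → Prop)]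
    (A : E →L[ℝ] E) (t : ℝ) : E →L[ℝ] E :=
  cfc (fun x : ℝ => x ^ t) A

theorem norm_mul_comm_of_isSelfAdjoint {R : Type*} [NonUnitalNormedRing R] [StarRing R]
    [NormedStarGroup R] {a b : R} (ha : IsSelfAdjoint a) (hb : IsSelfAdjoint b) :
    ‖a * b‖ = ‖b * a‖ := by
  rw [← norm_star, star_mul, ha.star_eq, hb.star_eq]

theorem norm_mul_sub_one_mul_le {E : Type*} [NormedAddCommGroup E] [NormedSpace ℝ E]
    {t g s a a' b b' q : E →L[ℝ] E} (ha : a' * a = 1) (hb : b' * b = 1) (hb' : b * b' = 1) :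
    ‖t * ((g * s - 1) * q)‖ ≤
      ‖t * a'‖ * (‖a * b'‖ * ‖b * g * b‖ * ‖b' * s * b'‖ * ‖b * a'‖ + 1) * ‖a * q‖ := by
  have cancel {x y : E →L[ℝ] E} (hxy : x * y = 1) (z : E →L[ℝ] E) : x * (y * z) = z := by
    rw [← mul_assoc, hxy, one_mul]
  have hconj : t * ((g * s - 1) * q) =
      t * a' * ((a * b') * (b * g * b) * (b' * s * b') * (b * a') - 1) * (a * q) := by
    simp only [mul_sub, sub_mul, mul_one, one_mul, mul_assoc, cancel ha, cancel hb, cancel hb']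
  have hmid : ‖(a * b') * (b * g * b) * (b' * s * b') * (b * a') - 1‖ ≤
      ‖a * b'‖ * ‖b * g * b‖ * ‖b' * s * b'‖ * ‖b * a'‖ + 1 := by
    refine (norm_sub_le _ _).trans (add_le_add ?_ norm_id_le)
    exact (norm_mul_le _ _).trans (mul_le_mul_of_nonneg_right norm_mul₃_le (norm_nonneg _))
  rw [hconj]
  exact norm_mul₃_le.trans (by gcongr)

section CFC

open scoped ContinuousFunctionalCalculus

variable {A : Type*} [NormedRing A] [StarRing A] [NormedAlgebra ℝ A]
  [ContinuousFunctionalCalculus ℝ A IsSelfAdjoint]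

theorem cfcHom_mul_eq_smul_of_mul_eq_smul {a q : A} (ha : IsSelfAdjoint a) {c : ℝ}
    (hc : c ∈ spectrum ℝ a) (haq : a * q = c • q) (f : C(spectrum ℝ a, ℝ)) :
    cfcHom ha f * q = f ⟨c, hc⟩ • q := by
  induction f using ContinuousMap.induction_on_of_compact with
  | const r =>
    rw [show ContinuousMap.const _ r = algebraMap ℝ C(spectrum ℝ a, ℝ) r from rfl,
      AlgHomClass.commutes, ← Algebra.smul_def]
    rfl
  | id => simpa [cfcHom_id ha] using haq
  | star_id => simpa [cfcHom_id ha] using haq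
  | add f g hf hg => rw [map_add, add_mul, hf, hg, ContinuousMap.add_apply, add_smul]
  | mul f g hf hg =>
    rw [map_mul, mul_assoc, hg, mul_smul_comm, hf, smul_smul, ContinuousMap.mul_apply, mul_comm]
  | frequently f hf => exact hf.mem_of_closed <| isClosed_eq (by fun_prop) (by fun_prop)

theorem cfc_mul_eq_smul_of_mul_eq_smul {a q : A} (ha : IsSelfAdjoint a) {c : ℝ}
    (haq : a * q = c • q) (f : ℝ → ℝ) (hf : ContinuousOn f (spectrum ℝ a)) :
    cfc f a * q = f c • q := by
  by_cases hc : c ∈ spectrum ℝ a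
  · rw [cfc_apply f a ha hf]
    exact cfcHom_mul_eq_smul_of_mul_eq_smul ha hc haq _
  · have hq : q = 0 := by
      rw [spectrum.notMem_iff] at hc
      refine hc.mul_right_eq_zero.mp ?_
      rw [sub_mul, haq, Algebra.smul_def, sub_self]
    simp [hq]

end CFC

section Hilbert

variable {E F : Type*} [NormedAddCommGroup E] [InnerProductSpace ℝ E] [CompleteSpace E]
  [NormedAddCommGroup F] [InnerProductSpace ℝ F] [CompleteSpace F]

theorem norm_le_one_of_isPositive_one_sub_adjoint_comp (A : E →L[ℝ] E)
    (h : (1 - adjoint A ∘L A).IsPositive) : ‖A‖ ≤ 1 := by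
  refine A.opNorm_le_bound zero_le_one fun x => ?_
  have hx : 0 ≤ ‖x‖ ^ 2 - ‖A x‖ ^ 2 := by
    simpa [inner_sub_left, adjoint_inner_left, real_inner_self_eq_norm_sq]
      using h.inner_nonneg_left x
  nlinarith [norm_nonneg (A x), norm_nonneg x]

theorem isStarProjection_comp_comp_adjoint {X : F →L[ℝ] E} {N : F →L[ℝ] F}
    (hN : IsSelfAdjoint N) (h : N ∘L (adjoint X ∘L X) = 1) :
    IsStarProjection (X ∘L N ∘L adjoint X) where
  isIdempotentElem := by
    change (X ∘L N ∘L adjoint X) ∘L (X ∘L N ∘L adjoint X) = X ∘L N ∘L adjoint X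
    simp only [comp_assoc]
    rw [← comp_assoc (adjoint X), ← comp_assoc N, h, one_def, id_comp]
  isSelfAdjoint := by
    rw [isSelfAdjoint_iff', adjoint_comp, adjoint_comp, adjoint_adjoint, hN.adjoint_eq, comp_assoc]

theorem mul_one_sub_eq_zero_of_range_le {A P : E →L[ℝ] E} (hA : IsSelfAdjoint A)
    (hP : IsStarProjection P)
    (h : LinearMap.range (A : E →ₗ[ℝ] E) ≤ LinearMap.range (P : E →ₗ[ℝ] E)) :
    A * (1 - P) = 0 := by
  have hPA : P * A = A := coe_injective <|
    (LinearMap.IsIdempotentElem.comp_eq_right_iff hP.isIdempotentElem.toLinearMap _).mpr h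
  have hAP : A * P = A := by
    simpa [hA.star_eq, hP.isSelfAdjoint.star_eq] using congrArg star hPA
  rw [mul_sub, mul_one, hAP, sub_self]

theorem ContinuousLinearMap.IsPositive.nonneg_of_mem_spectrum {A : E →L[ℝ] E}
    (hA : A.IsPositive) {x : ℝ} (hx : x ∈ spectrum ℝ A) : 0 ≤ x :=
  spectrum_nonneg_of_nonneg ((nonneg_iff_isPositive A).2 hA) hx

theorem ContinuousLinearMap.IsPositive.pos_of_mem_spectrum_add_smul_one {A : E →L[ℝ] E}
    (hA : A.IsPositive) {μ : ℝ} (hμ : 0 < μ) {x : ℝ} (hx : x ∈ spectrum ℝ (A + μ • 1)) :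
    0 < x := by
  rw [← Algebra.algebraMap_eq_smul_one, ← spectrum.add_singleton_eq] at hx
  obtain ⟨y, hy, _, rfl, rfl⟩ := hx
  linarith [hA.nonneg_of_mem_spectrum hy]

theorem ContinuousLinearMap.IsPositive.continuousOn_add_const_rpow {A : E →L[ℝ] E}
    (hA : A.IsPositive) {μ : ℝ} (hμ : 0 < μ) (t : ℝ) :
    ContinuousOn (fun x : ℝ => (x + μ) ^ t) (spectrum ℝ A) := fun x hx =>
  ((continuous_add_const μ).continuousAt.rpow_const
    (Or.inl (by linarith [hA.nonneg_of_mem_spectrum hx] : 0 < x + μ).ne')).continuousWithinAt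

end Hilbert

section OperatorPowers

variable {E : Type*} [NormedAddCommGroup E] [InnerProductSpace ℝ E] [CompleteSpace E]
  [ContinuousFunctionalCalculus ℝ (E →L[ℝ] E) IsSelfAdjoint]

theorem norm_cfc_le_one {A : E →L[ℝ] E} (hA : IsSelfAdjoint A) {f : ℝ → ℝ}
    (hf : ContinuousOn f (spectrum ℝ A)) (hf₁ : ∀ x ∈ spectrum ℝ A, |f x| ≤ 1) :
    ‖cfc f A‖ ≤ 1 := by
  -- the star order on real operators is not a global instance
  have := instStarOrderedRingRCLike (𝕜 := ℝ) (H := E)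
  apply norm_le_one_of_isPositive_one_sub_adjoint_comp
  have hsq : adjoint (cfc f A) ∘L cfc f A = cfc (fun x => f x ^ 2) A := by
    rw [← star_eq_adjoint, (cfc_predicate f A).star_eq, ← mul_def, ← cfc_mul f f A,
      cfc_congr fun x _ => (sq (f x)).symm]
  rw [← nonneg_iff_isPositive, hsq, ← cfc_one ℝ A, ← cfc_sub _ _ A]
  exact cfc_nonneg fun x hx => sub_nonneg.mpr ((sq_le_one_iff_abs_le_one _).mpr (hf₁ x hx))

theorem isSelfAdjoint_opow (A : E →L[ℝ] E) (t : ℝ) : IsSelfAdjoint (opow A t) :=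
  cfc_predicate _ A

theorem opow_zero {B : E →L[ℝ] E} (hB : IsSelfAdjoint B) : opow B 0 = 1 := by
  simp only [opow, Real.rpow_zero]
  exact cfc_const_one ℝ B hB

theorem opow_one {B : E →L[ℝ] E} (hB : IsSelfAdjoint B) : opow B 1 = B := by
  simp only [opow, Real.rpow_one]
  exact cfc_id' ℝ B hB

theorem opow_mul_opow {B : E →L[ℝ] E} (hB₀ : ∀ x ∈ spectrum ℝ B, 0 < x) (s t : ℝ) :
    opow B s * opow B t = opow B (s + t) := by
  have hcont (r : ℝ) : ContinuousOn (fun x : ℝ => x ^ r) (spectrum ℝ B) :=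
    (continuousOn_id' _).rpow_const fun x hx => Or.inl (hB₀ x hx).ne'
  rw [opow, opow, opow, ← cfc_mul _ _ B (hcont s) (hcont t)]
  exact cfc_congr fun x hx => (Real.rpow_add (hB₀ x hx) s t).symm

theorem opow_mul_eq_smul_of_mul_eq_smul {B Q : E →L[ℝ] E} (hB : IsSelfAdjoint B)
    (hB₀ : ∀ x ∈ spectrum ℝ B, 0 < x) {c : ℝ} (hBQ : B * Q = c • Q) (t : ℝ) :
    opow B t * Q = c ^ t • Q :=
  cfc_mul_eq_smul_of_mul_eq_smul hB hBQ _
    (continuousOn_id.rpow_const fun x hx => Or.inl (hB₀ x hx).ne')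

namespace ContinuousLinearMap.IsPositive

variable {A : E →L[ℝ] E} {μ : ℝ}

theorem opow_add_smul_one_mul_opow_add_smul_one (hA : A.IsPositive) (hμ : 0 < μ) {s t : ℝ}
    (hst : s + t = 0) :
    opow (A + μ • 1) s * opow (A + μ • 1) t = 1 := by
  rw [opow_mul_opow (fun x hx => hA.pos_of_mem_spectrum_add_smul_one hμ hx), hst,
    opow_zero (hA.add (isPositive_one.smul_of_nonneg hμ.le)).isSelfAdjoint]

theorem opow_add_smul_one (hA : A.IsPositive) (hμ : 0 < μ) (t : ℝ) :
    opow (A + μ • 1) t = cfc (fun x => (x + μ) ^ t) A := by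
  have hshift : A + μ • 1 = cfc (fun x => x + μ) A := by
    rw [cfc_add_const μ (fun x => x) A continuousOn_id hA.isSelfAdjoint,
      cfc_id' ℝ A hA.isSelfAdjoint, Algebra.algebraMap_eq_smul_one]
  rw [opow, hshift, ← cfc_comp' (fun x => x ^ t) (fun x => x + μ) A
    (continuousOn_id.rpow_const ?_) (by fun_prop) hA.isSelfAdjoint]
  rintro - ⟨x, hx, rfl⟩
  exact Or.inl (ne_of_gt (by dsimp only [id]; linarith [hA.nonneg_of_mem_spectrum hx]))

theorem norm_opow_mul_opow_add_smul_one_le_one (hA : A.IsPositive) (hμ : 0 < μ) :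
    ‖opow A (1 / 2) * opow (A + μ • 1) (-(1 / 2))‖ ≤ 1 := by
  have hcont := hA.continuousOn_add_const_rpow hμ (-(1 / 2))
  have hsqrt : ContinuousOn (fun x : ℝ => x ^ (1 / 2 : ℝ)) (spectrum ℝ A) :=
    (Real.continuous_rpow_const (by norm_num)).continuousOn
  rw [hA.opow_add_smul_one hμ, opow, ← cfc_mul _ _ A hsqrt hcont]
  refine norm_cfc_le_one hA.isSelfAdjoint (hsqrt.mul hcont) fun x hx => ?_
  have hx₀ := hA.nonneg_of_mem_spectrum hx
  rw [Real.rpow_neg (by linarith), ← div_eq_mul_inv, abs_div,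
    abs_of_nonneg (by positivity), abs_of_nonneg (by positivity)]
  exact div_le_one_of_le₀ (Real.rpow_le_rpow hx₀ (by linarith) (by norm_num)) (by positivity)

theorem norm_opow_add_smul_one_mul_mul_le_one (hA : A.IsPositive) (hμ : 0 < μ) :
    ‖opow (A + μ • 1) (-(1 / 2)) * A * opow (A + μ • 1) (-(1 / 2))‖ ≤ 1 := by
  have hpos {x : ℝ} (hx : x ∈ spectrum ℝ A) : 0 < x + μ := by
    linarith [hA.nonneg_of_mem_spectrum hx]
  have hcont := hA.continuousOn_add_const_rpow hμ (-(1 / 2))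
  have hprod : opow (A + μ • 1) (-(1 / 2)) * A * opow (A + μ • 1) (-(1 / 2)) =
      cfc (fun x => x / (x + μ)) A := by
    rw [hA.opow_add_smul_one hμ]
    conv_lhs => arg 1; arg 2; rw [← cfc_id' ℝ A hA.isSelfAdjoint]
    rw [← cfc_mul _ _ A hcont (continuousOn_id' _),
      ← cfc_mul (fun x => (x + μ) ^ (-(1 / 2) : ℝ) * x) _ A (hcont.mul (continuousOn_id' _)) hcont]
    refine cfc_congr fun x hx => ?_
    rw [mul_comm, ← mul_assoc, ← Real.rpow_add (hpos hx)]
    norm_num [Real.rpow_neg_one, div_eq_mul_inv, mul_comm]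
  rw [hprod]
  refine norm_cfc_le_one hA.isSelfAdjoint ((continuousOn_id' _).div (by fun_prop)
    fun x hx => (hpos hx).ne') fun x hx => ?_
  have hx₀ := hA.nonneg_of_mem_spectrum hx
  rw [abs_of_nonneg (by positivity)]
  exact div_le_one_of_le₀ (by linarith) (hpos hx).le

theorem opow_add_smul_one_mul_one_sub (hA : A.IsPositive) (hμ : 0 < μ) {P : E →L[ℝ] E}
    (hP : IsStarProjection P)
    (hAP : LinearMap.range (A : E →ₗ[ℝ] E) ≤ LinearMap.range (P : E →ₗ[ℝ] E)) (t : ℝ) :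
    opow (A + μ • 1) t * (1 - P) = μ ^ t • (1 - P) := by
  refine opow_mul_eq_smul_of_mul_eq_smul
    (hA.add (isPositive_one.smul_of_nonneg hμ.le)).isSelfAdjoint
    (fun x hx => hA.pos_of_mem_spectrum_add_smul_one hμ hx) ?_ t
  rw [add_mul, mul_one_sub_eq_zero_of_range_le hA.isSelfAdjoint hP hAP, zero_add, smul_mul_assoc,
    one_mul]

end ContinuousLinearMap.IsPositive

end OperatorPowers

theorem ContinuousLinearMap.IsPositive.isStarProjection_opow_comp_isometry
    {E F : Type*} [NormedAddCommGroup E] [InnerProductSpace ℝ E] [CompleteSpace E]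
    [NormedAddCommGroup F] [InnerProductSpace ℝ F] [CompleteSpace F]
    [ContinuousFunctionalCalculus ℝ (E →L[ℝ] E) IsSelfAdjoint]
    [ContinuousFunctionalCalculus ℝ (F →L[ℝ] F) IsSelfAdjoint]
    {S : E →L[ℝ] E} (hS : S.IsPositive) {V : F →L[ℝ] E} (hV : adjoint V ∘L V = 1)
    {μ : ℝ} (hμ : 0 < μ) :
    IsStarProjection (opow (S + μ • 1) (1 / 2) *
      (V ∘L opow (adjoint V ∘L S ∘L V + μ • 1) (-1) ∘L adjoint V) * opow (S + μ • 1) (1 / 2)) := by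
  set b := opow (S + μ • 1) (1 / 2)
  have hb : IsSelfAdjoint b := isSelfAdjoint_opow _ _
  have hbb : b ∘L b = S + μ • 1 := by
    rw [← mul_def, opow_mul_opow (fun x hx => hS.pos_of_mem_spectrum_add_smul_one hμ hx),
      add_halves, opow_one (hS.add (isPositive_one.smul_of_nonneg hμ.le)).isSelfAdjoint]
  have hM := hS.adjoint_conj V
  have hgram : adjoint (b ∘L V) ∘L (b ∘L V) = adjoint V ∘L S ∘L V + μ • 1 := by
    rw [adjoint_comp, hb.adjoint_eq, comp_assoc, ← comp_assoc b, hbb, add_comp, comp_add,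
      smul_comp, comp_smul, one_def, id_comp, hV, one_def]
  have hinv : opow (adjoint V ∘L S ∘L V + μ • 1) (-1) ∘L
      (adjoint (b ∘L V) ∘L (b ∘L V)) = 1 := by
    have h := hM.opow_add_smul_one_mul_opow_add_smul_one hμ (s := -1) (t := 1) (by norm_num)
    rw [hgram]
    rwa [opow_one (hM.add (isPositive_one.smul_of_nonneg hμ.le)).isSelfAdjoint] at h
  convert isStarProjection_comp_comp_adjoint (isSelfAdjoint_opow _ _) hinv using 1
  rw [adjoint_comp, hb.adjoint_eq]
  rfl

theorem stmt18_general
    {H K : Type*}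
    [NormedAddCommGroup H] [InnerProductSpace ℝ H] [CompleteSpace H]
    [NormedAddCommGroup K] [InnerProductSpace ℝ K] [CompleteSpace K]
    [ContinuousFunctionalCalculus ℝ (H →L[ℝ] H) (IsSelfAdjoint : (H →L[ℝ] H) → Prop)]
    [ContinuousFunctionalCalculus ℝ (K →L[ℝ] K) (IsSelfAdjoint : (K →L[ℝ] K) → Prop)]
    (T S Sn : H →L[ℝ] H) (hT : T.IsPositive) (hS : S.IsPositive) (hSn : Sn.IsPositive)
    (V : K →L[ℝ] H) (hV : adjoint V ∘L V = 1)
    (P : H →L[ℝ] H) (hPsa : IsSelfAdjoint P) (hPidem : P ∘L P = P)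
    (hPrange : LinearMap.range (P : H →ₗ[ℝ] H) = (LinearMap.range (Sn : H →ₗ[ℝ] H)).topologicalClosure)
    (mu : ℝ) (hmu : 0 < mu)
    (Qmu Qsmu Qn : ℝ)
    (hQmu : Qmu = ‖opow (S + mu • 1) (-(1 / 2)) ∘L opow (T + mu • 1) (1 / 2)‖)
    (hQsmu : Qsmu = ‖opow (T + mu • 1) (-(1 / 2)) ∘L opow (S + mu • 1) (1 / 2)‖)
    (hQn : Qn = ‖opow (Sn + mu • 1) (-(1 / 2)) ∘L opow (T + mu • 1) (1 / 2)‖) :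
    ‖opow T (1 / 2) ∘L
        (V ∘L opow (adjoint V ∘L S ∘L V + mu • 1) (-1) ∘L adjoint V ∘L S - 1) ∘L
        (1 - P)‖ ≤
      (Qmu * Qsmu + 1) * mu ^ (1 / 2 : ℝ) * Qn := by
  subst hQmu hQsmu hQn
  set a := opow (T + mu • 1) (1 / 2)
  set a' := opow (T + mu • 1) (-(1 / 2))
  set b := opow (S + mu • 1) (1 / 2)
  set b' := opow (S + mu • 1) (-(1 / 2))
  set c' := opow (Sn + mu • 1) (-(1 / 2))
  set g := V ∘L opow (adjoint V ∘L S ∘L V + mu • 1) (-1) ∘L adjoint V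
  have hP : IsStarProjection P := ⟨hPidem, hPsa⟩
  have hc' : c' * (1 - P) = mu ^ (-(1 / 2) : ℝ) • (1 - P) :=
    hSn.opow_add_smul_one_mul_one_sub hmu hP
      (hPrange ▸ Submodule.le_topologicalClosure _) _
  have hsa := isSelfAdjoint_opow (E := H)
  calc _ = mu ^ (1 / 2 : ℝ) * ‖opow T (1 / 2) * ((g * S - 1) * (c' * (1 - P)))‖ := by
        rw [hc', mul_smul_comm, mul_smul_comm, norm_smul, Real.norm_of_nonneg (by positivity),
          ← mul_assoc, ← Real.rpow_add hmu, add_neg_cancel, Real.rpow_zero, one_mul]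
        rfl
    _ ≤ mu ^ (1 / 2 : ℝ) * (‖opow T (1 / 2) * a'‖ *
          (‖a * b'‖ * ‖b * g * b‖ * ‖b' * S * b'‖ * ‖b * a'‖ + 1) * ‖a * (c' * (1 - P))‖) := by
      gcongr
      exact norm_mul_sub_one_mul_le
        (hT.opow_add_smul_one_mul_opow_add_smul_one hmu (by norm_num))
        (hS.opow_add_smul_one_mul_opow_add_smul_one hmu (by norm_num))
        (hS.opow_add_smul_one_mul_opow_add_smul_one hmu (by norm_num))
    _ ≤ mu ^ (1 / 2 : ℝ) * (1 * (‖b' ∘L a‖ * 1 * 1 * ‖a' ∘L b‖ + 1) * ‖c' ∘L a‖) := by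
      gcongr
      · exact hT.norm_opow_mul_opow_add_smul_one_le_one hmu
      · exact (norm_mul_comm_of_isSelfAdjoint (hsa _ _) (hsa _ _)).le
      · exact (hS.isStarProjection_opow_comp_isometry hV hmu).norm_le
      · exact hS.norm_opow_add_smul_one_mul_mul_le_one hmu
      · exact (norm_mul_comm_of_isSelfAdjoint (hsa _ _) (hsa _ _)).le
      · rw [← mul_assoc]
        refine (norm_mul_le _ _).trans ((mul_le_of_le_one_right (norm_nonneg _)
          hP.one_sub.norm_le).trans ?_)
        exact (norm_mul_comm_of_isSelfAdjoint (hsa _ _) (hsa _ _)).le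
    _ = _ := by ring

/-- the bound underlying the estimate of `C_{n,2}(D,λ,μ)`:
`‖T^{1/2}(V(V*SV+μ)^{-1}V*S − I)(I−P)‖ ≤ (Q_μ Q*_μ + 1) μ^{1/2} Q_{n,μ}`. -/
theorem stmt18
    {H K : Type*}
    [NormedAddCommGroup H] [InnerProductSpace ℝ H] [CompleteSpace H]
    [TopologicalSpace.SeparableSpace H]
    [NormedAddCommGroup K] [InnerProductSpace ℝ K] [CompleteSpace K]
    [TopologicalSpace.SeparableSpace K]
    [ContinuousFunctionalCalculus ℝ (H →L[ℝ] H) (IsSelfAdjoint : (H →L[ℝ] H) → Prop)]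
    [ContinuousFunctionalCalculus ℝ (K →L[ℝ] K) (IsSelfAdjoint : (K →L[ℝ] K) → Prop)]
    (T S Sn : H →L[ℝ] H) (hT : T.IsPositive) (hS : S.IsPositive) (hSn : Sn.IsPositive)
    (V : K →L[ℝ] H) (hV : adjoint V ∘L V = 1)
    (P : H →L[ℝ] H) (hPsa : IsSelfAdjoint P) (hPidem : P ∘L P = P)
    (hPrange : LinearMap.range (P : H →ₗ[ℝ] H) = (LinearMap.range (Sn : H →ₗ[ℝ] H)).topologicalClosure)
    (hVP : V ∘L adjoint V = P)
    (mu : ℝ) (hmu : 0 < mu)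
    (Qmu Qsmu Qn : ℝ)
    (hQmu : Qmu = ‖opow (S + mu • 1) (-(1 / 2)) ∘L opow (T + mu • 1) (1 / 2)‖)
    (hQsmu : Qsmu = ‖opow (T + mu • 1) (-(1 / 2)) ∘L opow (S + mu • 1) (1 / 2)‖)
    (hQn : Qn = ‖opow (Sn + mu • 1) (-(1 / 2)) ∘L opow (T + mu • 1) (1 / 2)‖) :
    ‖opow T (1 / 2) ∘L
        (V ∘L opow (adjoint V ∘L S ∘L V + mu • 1) (-1) ∘L adjoint V ∘L S - 1) ∘L
        (1 - P)‖ ≤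
      (Qmu * Qsmu + 1) * mu ^ (1 / 2 : ℝ) * Qn :=
  stmt18_general T S Sn hT hS hSn V hV P hPsa hPidem hPrange mu hmu Qmu Qsmu Qn hQmu hQsmu hQn
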